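/- In the rank-based construction of a random partition-tree over [T] (each divider d in [T-1] gets an i.i.d. uniform rank, and each window splits at its minimum-rank internal divider, with the sequence boundaries treated as dividers of rank 0), a contiguous subsequence [t_start, t_end] is a window of the tree if and only if the dividers immediately bordering t_start on the left and t_end on the right both have smaller ranks than all dividers strictly between t_start and t_end. -/
import Mathlib


/-- A (binary) partition-tree: a leaf holds a single day, an internal node holds the
endpoints `s`, `e` of its window together with its two children. -/
inductive PTree : Type
  | leaf : ℕ → PTree
  | node : ℕ → ℕ → PTree → PTree → PTree

/-- A divider of minimum rank in `Ico s e`, with respect to the rank function `r`. -/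
noncomputable def argminRank (r : ℕ → ℝ) (s e : ℕ) : ℕ :=
  if h : (Finset.Ico s e).Nonempty then
    Classical.choose (Finset.exists_min_image (Finset.Ico s e) r h)
  else s

/-- The deterministic partition-tree over the window `[s, e]` obtained by recursively
splitting each window at its internal divider of minimum rank (divider `d` separates day
`d` from day `d + 1`).  The first argument is fuel; `rankTree` instantiates it with the
window size. -/
noncomputable def rankTreeAux (r : ℕ → ℝ) : ℕ → ℕ → ℕ → PTree
  | 0, s, _ => PTree.leaf s
  | fuel + 1, s, e =>
    if s < e then
      PTree.node s e (rankTreeAux r fuel s (argminRank r s e))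
        (rankTreeAux r fuel (argminRank r s e + 1) e)
    else PTree.leaf s

/-- The rank-based partition-tree over the window `[s, e]`. -/
noncomputable def rankTree (r : ℕ → ℝ) (s e : ℕ) : PTree := rankTreeAux r (e - s) s e

/-- `[s, e]` occurs as a window (node) of the given partition-tree. -/
def hasWindow : PTree → ℕ → ℕ → Prop
  | .leaf d, s, e => s = d ∧ e = d
  | .node s' e' l r, s, e => (s = s' ∧ e = e') ∨ hasWindow l s e ∨ hasWindow r s e

lemma argminRank_spec {r : ℕ → ℝ} {s e : ℕ} (h : s < e) :
    argminRank r s e ∈ Finset.Ico s e ∧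
      ∀ d ∈ Finset.Ico s e, r (argminRank r s e) ≤ r d := by
  have hne : (Finset.Ico s e).Nonempty := ⟨s, Finset.mem_Ico.2 ⟨le_refl s, h⟩⟩
  unfold argminRank
  rw [dif_pos hne]
  exact Classical.choose_spec (Finset.exists_min_image (Finset.Ico s e) r hne)

lemma hasWindow_bounds (r : ℕ → ℝ) :
    ∀ fuel s e ts te, s ≤ e → hasWindow (rankTreeAux r fuel s e) ts te →
      s ≤ ts ∧ ts ≤ te ∧ te ≤ e := by
  intro fuel
  induction fuel with
  | zero =>
    intro s e ts te hse hw
    simp only [rankTreeAux, hasWindow] at hw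
    omega
  | succ fuel ih =>
    intro s e ts te hse hw
    by_cases h : s < e
    · simp only [rankTreeAux, if_pos h, hasWindow] at hw
      obtain ⟨hm, _⟩ := argminRank_spec (r := r) h
      rw [Finset.mem_Ico] at hm
      rcases hw with ⟨h1, h2⟩ | hw | hw
      · omega
      · have := ih s (argminRank r s e) ts te (by omega) hw
        omega
      · have := ih (argminRank r s e + 1) e ts te (by omega) hw
        omega
    · simp only [rankTreeAux, if_neg h, hasWindow] at hw
      omega

lemma rankTree_main (T : ℕ) (r : ℕ → ℝ)
    (hinj : Set.InjOn r (Set.Icc 1 (T - 1))) :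
    ∀ fuel s e, e - s ≤ fuel → 1 ≤ s → e ≤ T → s ≤ e →
      (∀ d, s ≤ d → d < e → r (s - 1) < r d ∧ r e < r d) →
      ∀ ts te, s ≤ ts → ts ≤ te → te ≤ e →
        (hasWindow (rankTreeAux r fuel s e) ts te ↔
          ∀ d, ts ≤ d → d < te → r (ts - 1) < r d ∧ r te < r d) := by
  intro fuel
  induction fuel with
  | zero =>
    intro s e hfuel hs he hse hinv ts te h1 h2 h3
    have : s = e := by omega
    subst this
    simp only [rankTreeAux, hasWindow]
    constructor
    · intro _ d hd1 hd2
      exact absurd hd2 (by omega)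
    · exact fun _ => ⟨by omega, by omega⟩
  | succ fuel ih =>
    intro s e hfuel hs he hse hinv ts te h1 h2 h3
    by_cases h : s < e
    · set m := argminRank r s e with hm_def
      obtain ⟨hmmem, hmmin⟩ := argminRank_spec (r := r) (s := s) (e := e) h
      rw [Finset.mem_Ico] at hmmem
      have hstrict : ∀ d, s ≤ d → d < e → d ≠ m → r m < r d := by
        intro d hd1 hd2 hdm
        have hle := hmmin d (Finset.mem_Ico.2 ⟨hd1, hd2⟩)
        rcases lt_or_eq_of_le hle with h' | h'
        · exact h'
        · exact absurd (hinj ⟨by omega, by omega⟩ ⟨by omega, by omega⟩ h'.symm) hdm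
      have hinvL : ∀ d, s ≤ d → d < m → r (s - 1) < r d ∧ r m < r d := by
        intro d hd1 hd2
        exact ⟨(hinv d hd1 (by omega)).1, hstrict d hd1 (by omega) (by omega)⟩
      have hinvR : ∀ d, m + 1 ≤ d → d < e → r m < r d ∧ r e < r d := by
        intro d hd1 hd2
        exact ⟨hstrict d (by omega) hd2 (by omega), (hinv d (by omega) hd2).2⟩
      simp only [rankTreeAux, if_pos h, hasWindow]
      constructor
      · rintro (⟨rfl, rfl⟩ | hw | hw)
        · exact fun d hd1 hd2 => hinv d hd1 hd2
        · obtain ⟨b1, b2, b3⟩ := hasWindow_bounds r fuel s m ts te (by omega) hw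
          exact (ih s m (by omega) hs (by omega) (by omega) hinvL ts te b1 b2 b3).1 hw
        · obtain ⟨b1, b2, b3⟩ := hasWindow_bounds r fuel (m + 1) e ts te (by omega) hw
          exact (ih (m + 1) e (by omega) (by omega) he (by omega) hinvR ts te b1 b2 b3).1 hw
      · intro hC
        by_cases hbase : ts = s ∧ te = e
        · exact Or.inl hbase
        · have hsplit : te ≤ m ∨ m + 1 ≤ ts := by
            by_contra hc
            push_neg at hc
            have hm1 : ts ≤ m := by omega
            have hm2 : m < te := by omega
            rcases (by omega : s < ts ∨ te < e) with h' | h'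
            · have h'' := hmmin (ts - 1) (Finset.mem_Ico.2 ⟨by omega, by omega⟩)
              linarith [h'', (hC m hm1 hm2).1]
            · have h'' := hmmin te (Finset.mem_Ico.2 ⟨by omega, by omega⟩)
              linarith [h'', (hC m hm1 hm2).2]
          rcases hsplit with hL | hR
          · exact Or.inr (Or.inl
              ((ih s m (by omega) hs (by omega) (by omega) hinvL ts te h1 h2 hL).2 hC))
          · exact Or.inr (Or.inr
              ((ih (m + 1) e (by omega) (by omega) he (by omega) hinvR ts te hR h2 h3).2 hC))
    · have : s = e := by omega
      subst this
      simp only [rankTreeAux, if_neg h, hasWindow]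
      constructor
      · intro _ d hd1 hd2
        exact absurd hd2 (by omega)
      · exact fun _ => ⟨by omega, by omega⟩

/-- In the rank-based construction of a partition-tree over `[T]` (each
divider `d ∈ [T-1]` gets a rank, each window splits at its minimum-rank internal divider,
and the sequence boundaries, dividers `0` and `T`, have rank `0`), a contiguous
subsequence `[t_start, t_end]` is a window of the tree if and only if the dividers
immediately bordering `t_start` on the left (divider `t_start - 1`) and `t_end` on the
right (divider `t_end`) both have smaller ranks than all dividers strictly between
`t_start` and `t_end` (the dividers `d` with `t_start ≤ d ≤ t_end - 1`).
Ranks of distinct dividers are assumed distinct (as happens almost surely). -/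
theorem hasWindow_iff_bordering_ranks_lt
    (T : ℕ) (hT : 1 ≤ T) (r : ℕ → ℝ)
    (h0 : r 0 = 0) (hTr : r T = 0)
    (hpos : ∀ d, 1 ≤ d → d ≤ T - 1 → 0 < r d)
    (hinj : Set.InjOn r (Set.Icc 1 (T - 1)))
    (ts te : ℕ) (hts : 1 ≤ ts) (hste : ts ≤ te) (hteT : te ≤ T) :
    hasWindow (rankTree r 1 T) ts te ↔
      ∀ d, ts ≤ d → d ≤ te - 1 → r (ts - 1) < r d ∧ r te < r d := by
  
  have key := rankTree_main T r hinj (T - 1) 1 T (by omega) le_rfl le_rfl hT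
    (by
      intro d hd1 hd2
      constructor
      · rw [show (1 : ℕ) - 1 = 0 from rfl, h0]
        exact hpos d hd1 (by omega)
      · rw [hTr]
        exact hpos d hd1 (by omega))
    ts te hts hste hteT
  rw [show rankTree r 1 T = rankTreeAux r (T - 1) 1 T from rfl, key]
  constructor
  · intro hC d hd1 hd2
    exact hC d hd1 (by omega)
  · intro hC d hd1 hd2
    exact hC d hd1 (by omega)
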